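/- The terminating q-binomial theorem: for a nonnegative integer n and complex numbers q, z with q ≠ 0, the sum over j from 0 to n of ((q^{-n};q)_j / (q;q)_j) · z^j equals (z q^{-n}; q)_n, where (a;q)_k = ∏_{i=0}^{k-1} (1 - a q^i). -/

import Mathlib

/-!
Write `c_j(b) = (b;q)_j / (q;q)_j`. Comparing the first factors of `(b;q)_{j+1}` and the last factors
of `(bq;q)_{j+1}` gives the contiguous relation `c_{j+1}(b) = c_{j+1}(bq) - b c_j(bq)`, so the
generating polynomial for the parameter `b` is that for `bq` times `1 - bz`, up to its top term.
For `b = q^{-(n+1)}` the top term vanishes, since `(q^{-n};q)_{n+1}` contains the factor `1 - q^{-n} q^n`,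
and induction on `n` gives the product `(z q^{-n};q)_n`.
-/

/-- Finite q-shifted factorial: (x;q)_n = ∏_{i=0}^{n-1} (1 - x q^i). -/
noncomputable def qp (x q : ℂ) (n : ℕ) : ℂ := ∏ i ∈ Finset.range n, (1 - x * q ^ i)

/-- Infinite q-shifted factorial: (x;q)_∞ = ∏_{j=0}^∞ (1 - x q^j). -/
noncomputable def qpInf (x q : ℂ) : ℂ := ∏' j : ℕ, (1 - x * q ^ j)

/-- q-shifted factorial with integer index: (x;q)_k = (x;q)_∞ / (x q^k;q)_∞. -/
noncomputable def qpZ (x q : ℂ) (k : ℤ) : ℂ := qpInf x q / qpInf (x * q ^ k) q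

open Finset

@[simp]
lemma qp_zero (x q : ℂ) : qp x q 0 = 1 := prod_range_zero _

lemma qp_succ (x q : ℂ) (n : ℕ) : qp x q (n + 1) = qp x q n * (1 - x * q ^ n) :=
  prod_range_succ _ _

lemma qp_succ' (x q : ℂ) (n : ℕ) : qp x q (n + 1) = (1 - x) * qp (x * q) q n := by
  simp only [qp, prod_range_succ', pow_zero, mul_one, pow_succ, mul_assoc, mul_comm]

lemma qp_zpow_neg_eq_zero {q : ℂ} (hq : q ≠ 0) {n m : ℕ} (h : n < m) :
    qp (q ^ (-(n : ℤ))) q m = 0 :=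
  prod_eq_zero (mem_range.mpr h) <| by
    rw [zpow_neg, zpow_natCast, inv_mul_cancel₀ (pow_ne_zero n hq), sub_self]

lemma qp_div_qp_succ_eq_sub (b q : ℂ) (j : ℕ) (hj : qp q q (j + 1) ≠ 0) :
    qp b q (j + 1) / qp q q (j + 1)
      = qp (b * q) q (j + 1) / qp q q (j + 1) - b * (qp (b * q) q j / qp q q j) := by
  rw [qp_succ q q j] at hj ⊢
  have hqj : qp q q j ≠ 0 := left_ne_zero_of_mul hj
  have hlast : 1 - q * q ^ j ≠ 0 := right_ne_zero_of_mul hj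
  rw [qp_succ', qp_succ (b * q)]
  field_simp
  ring

lemma sum_qp_div_qp_mul_pow_eq_sub (b q z : ℂ) (m : ℕ) (hden : ∀ j ≤ m, qp q q j ≠ 0) :
    ∑ j ∈ range (m + 1), qp b q j / qp q q j * z ^ j
      = ∑ j ∈ range (m + 1), qp (b * q) q j / qp q q j * z ^ j
        - b * z * ∑ j ∈ range m, qp (b * q) q j / qp q q j * z ^ j := by
  have hterm : ∀ j ∈ range m, qp b q (j + 1) / qp q q (j + 1) * z ^ (j + 1)
      = qp (b * q) q (j + 1) / qp q q (j + 1) * z ^ (j + 1)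
        - b * z * (qp (b * q) q j / qp q q j * z ^ j) := fun j hj => by
    rw [qp_div_qp_succ_eq_sub b q j (hden (j + 1) (mem_range.mp hj))]
    ring
  rw [sum_range_succ', sum_range_succ' _ m, sum_congr rfl hterm, sum_sub_distrib, mul_sum]
  simp only [qp_zero]
  ring

/-- Terminating q-binomial theorem. -/
theorem terminating_q_binomial (n : ℕ) (q z : ℂ) (hq : q ≠ 0)
    (hden : ∀ j ≤ n, qp q q j ≠ 0) :
    ∑ j ∈ Finset.range (n + 1), qp (q ^ (-(n : ℤ))) q j / qp q q j * z ^ j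
      = qp (z * q ^ (-(n : ℤ))) q n := by
  induction n with
  | zero => simp
  | succ n ih =>
    have hshift : q ^ (-((n + 1 : ℕ) : ℤ)) * q = q ^ (-(n : ℤ)) := by
      rw [← zpow_add_one₀ hq]
      push_cast
      ring_nf
    have htop : qp (q ^ (-(n : ℤ))) q (n + 1) = 0 := qp_zpow_neg_eq_zero hq n.lt_succ_self
    rw [sum_qp_div_qp_mul_pow_eq_sub _ q z (n + 1) hden, hshift, sum_range_succ _ (n + 1), htop,
      zero_div, zero_mul, add_zero, ih fun j hj => hden j (hj.trans n.le_succ), qp_succ',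
      mul_assoc z, hshift]
    ring
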